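/- Let φ : ℝ⁵ → ℝ be C³ and assume that the function L₁(Ā₁) − L̄₁(A₁) vanishes nowhere on ℝ⁵. Set k := −( L₂(Ā₁) − L̄₁(A₂) ) / ( L₁(Ā₁) − L̄₁(A₁) ) and define the operator K f := k·(L₁ f) + L₂ f. Then for every C² function f : ℝ⁵ → ℂ: [K, L₁] f = −L₁(k)·(L₁ f) and [K, L̄₁] f = −L̄₁(k)·(L₁ f). (These are the brackets [K, L₁] = −L₁(k)·L₁ and [K, L̄₁] = −L̄₁(k)·L₁ involving the Levi-kernel field K of General Class IV₂; the second cancellation uses the defining property of k.) -/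

import Mathlib

/-!
`L₁`, `L₂`, `L̄₁` are complex vector fields whose coefficients are constant except in front of
`∂ᵤ`, so the commutator of two of them is a multiple of `∂ᵤ`: for `P = X + α∂ᵤ`, `Q = Y + β∂ᵤ`
with `X`, `Y` of constant coefficients, `[P, Q] = (P β − Q α) ∂ᵤ`. By the Leibniz rule
`[K, Z] = k [L₁, Z] + [L₂, Z] − Z(k) L₁`, so the two brackets reduce to `[L₂, L₁] = 0` and
`k [L₁, L̄₁] + [L₂, L̄₁] = 0`. The second is the definition of `k`; the first holds because `L₁`
and `L₂` both annihilate `φ + iu`.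
-/

noncomputable section
open Complex ComplexConjugate

/-- Points of `ℝ⁵`, with coordinates `(x₁, y₁, x₂, y₂, u)`, `z₁ = x₁ + i y₁`,
`z₂ = x₂ + i y₂`. -/
abbrev V5 := Fin 5 → ℝ

/-- Partial derivative in the `j`-th coordinate direction. -/
def pd (j : Fin 5) (f : V5 → ℂ) : V5 → ℂ := fun p => fderiv ℝ f p (Pi.single j 1)

/-- Wirtinger derivative `f_{z₁} := (f_{x₁} − i f_{y₁})/2`. -/
def wz1 (f : V5 → ℂ) : V5 → ℂ := fun p => (pd 0 f p - I * pd 1 f p) / 2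

/-- Wirtinger derivative `f_{z̄₁} := (f_{x₁} + i f_{y₁})/2`. -/
def wzb1 (f : V5 → ℂ) : V5 → ℂ := fun p => (pd 0 f p + I * pd 1 f p) / 2

/-- Wirtinger derivative `f_{z₂} := (f_{x₂} − i f_{y₂})/2`. -/
def wz2 (f : V5 → ℂ) : V5 → ℂ := fun p => (pd 2 f p - I * pd 3 f p) / 2

/-- Wirtinger derivative `f_{z̄₂} := (f_{x₂} + i f_{y₂})/2`. -/
def wzb2 (f : V5 → ℂ) : V5 → ℂ := fun p => (pd 2 f p + I * pd 3 f p) / 2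

/-- Partial derivative `f_u`. -/
def du (f : V5 → ℂ) : V5 → ℂ := pd 4 f

/-- Complexification of a real-valued function. -/
def cl (φ : V5 → ℝ) : V5 → ℂ := fun p => (φ p : ℂ)

variable (φ : V5 → ℝ)

/-- The coefficient `A₁ := −φ_{z₁}/(i + φ_u)`. -/
def A1 : V5 → ℂ := fun p => -(wz1 (cl φ) p) / (I + du (cl φ) p)

/-- The coefficient `A₂ := −φ_{z₂}/(i + φ_u)`. -/
def A2 : V5 → ℂ := fun p => -(wz2 (cl φ) p) / (I + du (cl φ) p)

/-- The operator `L₁ f := f_{z₁} + A₁ f_u`. -/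
def L1 (f : V5 → ℂ) : V5 → ℂ := fun p => wz1 f p + A1 φ p * du f p

/-- The operator `L₂ f := f_{z₂} + A₂ f_u`. -/
def L2 (f : V5 → ℂ) : V5 → ℂ := fun p => wz2 f p + A2 φ p * du f p

/-- The conjugate operator `L̄₁ f := f_{z̄₁} + Ā₁ f_u`. -/
def Lb1 (f : V5 → ℂ) : V5 → ℂ := fun p => wzb1 f p + conj (A1 φ p) * du f p

/-- The conjugate operator `L̄₂ f := f_{z̄₂} + Ā₂ f_u`. -/
def Lb2 (f : V5 → ℂ) : V5 → ℂ := fun p => wzb2 f p + conj (A2 φ p) * du f p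

/-- The fundamental function `k := −( L₂(Ā₁) − L̄₁(A₂) ) / ( L₁(Ā₁) − L̄₁(A₁) )`. -/
def kf : V5 → ℂ := fun p =>
  -(L2 φ (fun q => conj (A1 φ q)) p - Lb1 φ (A2 φ) p)
    / (L1 φ (fun q => conj (A1 φ q)) p - Lb1 φ (A1 φ) p)

/-- The Levi-kernel field `K f := k·(L₁ f) + L₂ f`. -/
def Kof (f : V5 → ℂ) : V5 → ℂ := fun p => kf φ p * L1 φ f p + L2 φ f p

section

variable {φ} {f g : V5 → ℂ} {p : V5}

lemma contDiff_pd {n : WithTop ℕ∞} (hf : ContDiff ℝ (n + 1) f) (j : Fin 5) :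
    ContDiff ℝ n (pd j f) :=
  show ContDiff ℝ n (fun q => fderiv ℝ f q (Pi.single j 1)) from
  (hf.fderiv_right le_rfl).clm_apply contDiff_const

lemma pd_add (hf : DifferentiableAt ℝ f p) (hg : DifferentiableAt ℝ g p) (j : Fin 5) :
    pd j (fun q => f q + g q) p = pd j f p + pd j g p := by
  simp [pd, fderiv_fun_add hf hg]

lemma pd_mul (hf : DifferentiableAt ℝ f p) (hg : DifferentiableAt ℝ g p) (j : Fin 5) :
    pd j (fun q => f q * g q) p = pd j f p * g p + f p * pd j g p := by
  simp [pd, fderiv_fun_mul hf hg]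
  ring

lemma pd_sum {ι : Type*} (s : Finset ι) {g : ι → V5 → ℂ}
    (hg : ∀ i ∈ s, DifferentiableAt ℝ (g i) p) (j : Fin 5) :
    pd j (fun q => ∑ i ∈ s, g i q) p = ∑ i ∈ s, pd j (g i) p := by
  simp [pd, fderiv_fun_sum hg]

lemma pd_const (c : ℂ) (j : Fin 5) (p : V5) : pd j (fun _ => c) p = 0 := by
  simp [pd]

lemma pd_pd_comm (hf : ContDiff ℝ 2 f) (i j : Fin 5) (p : V5) :
    pd i (pd j f) p = pd j (pd i f) p := by
  have hf' : Differentiable ℝ (fderiv ℝ f) :=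
    (hf.fderiv_right (m := 1) le_rfl).differentiable one_ne_zero
  have pd_pd : ∀ i j : Fin 5,
      pd i (pd j f) p = fderiv ℝ (fderiv ℝ f) p (Pi.single i 1) (Pi.single j 1) := by
    intro i j
    show fderiv ℝ (fun q => fderiv ℝ f q (Pi.single j 1)) p (Pi.single i 1) = _
    simp [fderiv_clm_apply (hf' p) (differentiableAt_const (Pi.single j (1 : ℝ)))]
  rw [pd_pd, pd_pd]
  exact hf.contDiffAt.isSymmSndFDerivAt (by simp) _ _

def vfield (a : V5 → Fin 5 → ℂ) (f : V5 → ℂ) : V5 → ℂ := fun p => ∑ j, a p j * pd j f p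

lemma vfield_add (a : V5 → Fin 5 → ℂ) (hf : DifferentiableAt ℝ f p)
    (hg : DifferentiableAt ℝ g p) :
    vfield a (fun q => f q + g q) p = vfield a f p + vfield a g p := by
  simp only [vfield, pd_add hf hg, mul_add, Finset.sum_add_distrib]

lemma vfield_mul (a : V5 → Fin 5 → ℂ) (hf : DifferentiableAt ℝ f p)
    (hg : DifferentiableAt ℝ g p) :
    vfield a (fun q => f q * g q) p = vfield a f p * g p + f p * vfield a g p := by
  simp only [vfield, pd_mul hf hg, mul_add, Finset.sum_add_distrib, Finset.sum_mul,
    Finset.mul_sum]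
  congr 1 <;> exact Finset.sum_congr rfl fun _ _ => by ring

lemma vfield_const (a : V5 → Fin 5 → ℂ) (c : ℂ) (p : V5) : vfield a (fun _ => c) p = 0 := by
  simp [vfield, pd_const]

lemma vfield_vfield {a b : V5 → Fin 5 → ℂ} (hb : ∀ m, DifferentiableAt ℝ (fun q => b q m) p)
    (hf : ∀ m, DifferentiableAt ℝ (pd m f) p) :
    vfield a (vfield b f) p = ∑ m, vfield a (fun q => b q m) p * pd m f p
      + ∑ j, ∑ m, a p j * b p m * pd j (pd m f) p := by
  have pd_vfield : ∀ j, pd j (vfield b f) p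
      = ∑ m, (pd j (fun q => b q m) p * pd m f p + b p m * pd j (pd m f) p) := by
    intro j
    rw [show vfield b f = fun q => ∑ m, b q m * pd m f q from rfl,
      pd_sum (g := fun m q => b q m * pd m f q) _ fun m _ => (hb m).mul (hf m)]
    exact Finset.sum_congr rfl fun m _ => pd_mul (hb m) (hf m) j
  simp only [vfield, pd_vfield, Finset.mul_sum, Finset.sum_mul, mul_add, Finset.sum_add_distrib]
  rw [Finset.sum_comm (f := fun j m => a p j * (pd j (fun q => b q m) p * pd m f p))]
  congr 1 <;> exact Finset.sum_congr rfl fun _ _ => Finset.sum_congr rfl fun _ _ => by ring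

lemma vfield_comm {a b : V5 → Fin 5 → ℂ} (ha : ∀ j, DifferentiableAt ℝ (fun q => a q j) p)
    (hb : ∀ j, DifferentiableAt ℝ (fun q => b q j) p) (hf : ContDiff ℝ 2 f) :
    vfield a (vfield b f) p - vfield b (vfield a f) p
      = ∑ m, (vfield a (fun q => b q m) p - vfield b (fun q => a q m) p) * pd m f p := by
  have hpdf : ∀ m, DifferentiableAt ℝ (pd m f) p := fun m =>
    ((contDiff_pd (n := 1) hf m).differentiable one_ne_zero) p
  have second_order_symm : ∑ j, ∑ m, a p j * b p m * pd j (pd m f) p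
      = ∑ j, ∑ m, b p j * a p m * pd j (pd m f) p := by
    rw [Finset.sum_comm]
    exact Finset.sum_congr rfl fun j _ => Finset.sum_congr rfl fun m _ => by
      rw [pd_pd_comm hf]; ring
  rw [vfield_vfield hb hpdf, vfield_vfield ha hpdf, second_order_symm]
  simp only [sub_mul, Finset.sum_sub_distrib]
  ring

lemma ContDiff.vfield {n : WithTop ℕ∞} {a : V5 → Fin 5 → ℂ}
    (ha : ∀ j, ContDiff ℝ n (fun q => a q j)) (hf : ContDiff ℝ (n + 1) f) :
    ContDiff ℝ n (vfield a f) :=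
  ContDiff.sum fun j _ => (ha j).mul (contDiff_pd hf j)

def uField (c : Fin 5 → ℂ) (α : V5 → ℂ) : V5 → Fin 5 → ℂ := fun q => Function.update c 4 (α q)

lemma contDiff_uField_apply {n : WithTop ℕ∞} {c : Fin 5 → ℂ} {α : V5 → ℂ}
    (hα : ContDiff ℝ n α) (j : Fin 5) : ContDiff ℝ n (fun q => uField c α q j) := by
  by_cases h : j = 4
  · subst h
    simpa only [uField, Function.update_self] using hα
  · simpa only [uField, Function.update_of_ne h] using contDiff_const

lemma differentiableAt_uField_apply {c : Fin 5 → ℂ} {α : V5 → ℂ}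
    (hα : DifferentiableAt ℝ α p) (j : Fin 5) : DifferentiableAt ℝ (fun q => uField c α q j) p := by
  by_cases h : j = 4
  · subst h
    simpa only [uField, Function.update_self] using hα
  · simpa only [uField, Function.update_of_ne h] using differentiableAt_const _

lemma vfield_uField_comm {c d : Fin 5 → ℂ} {α β : V5 → ℂ} (hα : DifferentiableAt ℝ α p)
    (hβ : DifferentiableAt ℝ β p) (hf : ContDiff ℝ 2 f) :
    vfield (uField c α) (vfield (uField d β) f) p - vfield (uField d β) (vfield (uField c α) f) p
      = (vfield (uField c α) β p - vfield (uField d β) α p) * pd 4 f p := by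
  rw [vfield_comm (differentiableAt_uField_apply hα) (differentiableAt_uField_apply hβ) hf,
    Fin.sum_univ_five]
  simp [uField, vfield_const]

def coeffL1 (φ : V5 → ℝ) : V5 → Fin 5 → ℂ := uField ![1 / 2, -I / 2, 0, 0, 0] (A1 φ)

def coeffL2 (φ : V5 → ℝ) : V5 → Fin 5 → ℂ := uField ![0, 0, 1 / 2, -I / 2, 0] (A2 φ)

def coeffLb1 (φ : V5 → ℝ) : V5 → Fin 5 → ℂ := uField ![1 / 2, I / 2, 0, 0, 0] fun q => conj (A1 φ q)

lemma L1_eq_vfield (φ : V5 → ℝ) : L1 φ = vfield (coeffL1 φ) := by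
  funext f p
  simp [L1, vfield, coeffL1, uField, wz1, du, Fin.sum_univ_five]
  ring

lemma L2_eq_vfield (φ : V5 → ℝ) : L2 φ = vfield (coeffL2 φ) := by
  funext f p
  simp [L2, vfield, coeffL2, uField, wz2, du, Fin.sum_univ_five]
  ring

lemma Lb1_eq_vfield (φ : V5 → ℝ) : Lb1 φ = vfield (coeffLb1 φ) := by
  funext f p
  simp [Lb1, vfield, coeffLb1, uField, wzb1, du, Fin.sum_univ_five]
  ring

lemma contDiff_cl {n : WithTop ℕ∞} (hφ : ContDiff ℝ n φ) : ContDiff ℝ n (cl φ) :=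
  ofRealCLM.contDiff.comp hφ

lemma pd_cl (hφ : DifferentiableAt ℝ φ p) (j : Fin 5) :
    pd j (cl φ) p = (fderiv ℝ φ p (Pi.single j 1) : ℂ) := by
  have h : HasFDerivAt (cl φ) (ofRealCLM.comp (fderiv ℝ φ p)) p :=
    ofRealCLM.hasFDerivAt.comp p hφ.hasFDerivAt
  rw [pd, h.fderiv]
  rfl

lemma I_add_du_cl_ne_zero (hφ : DifferentiableAt ℝ φ p) : I + du (cl φ) p ≠ 0 := by
  intro h
  simpa [du, pd_cl hφ] using congrArg im h

lemma contDiff_A1 {n : WithTop ℕ∞} (hφ : ContDiff ℝ (n + 1) φ) : ContDiff ℝ n (A1 φ) := by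
  have hcl := contDiff_cl hφ
  have hwz1 : ContDiff ℝ n (wz1 (cl φ)) :=
    ((contDiff_pd hcl 0).sub (contDiff_const.mul (contDiff_pd hcl 1))).div_const 2
  exact hwz1.neg.mul ((contDiff_const.add (contDiff_pd hcl 4)).inv fun p =>
    I_add_du_cl_ne_zero (hφ.differentiable (by simp) p))

lemma contDiff_A2 {n : WithTop ℕ∞} (hφ : ContDiff ℝ (n + 1) φ) : ContDiff ℝ n (A2 φ) := by
  have hcl := contDiff_cl hφ
  have hwz2 : ContDiff ℝ n (wz2 (cl φ)) :=
    ((contDiff_pd hcl 2).sub (contDiff_const.mul (contDiff_pd hcl 3))).div_const 2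
  exact hwz2.neg.mul ((contDiff_const.add (contDiff_pd hcl 4)).inv fun p =>
    I_add_du_cl_ne_zero (hφ.differentiable (by simp) p))

lemma contDiff_conj_A1 {n : WithTop ℕ∞} (hφ : ContDiff ℝ (n + 1) φ) :
    ContDiff ℝ n (fun q => conj (A1 φ q)) :=
  conjCLE.contDiff.comp (contDiff_A1 hφ)

lemma contDiff_L1 {n : WithTop ℕ∞} (hφ : ContDiff ℝ (n + 1) φ) (hf : ContDiff ℝ (n + 1) f) :
    ContDiff ℝ n (L1 φ f) := by
  rw [L1_eq_vfield]
  exact ContDiff.vfield (contDiff_uField_apply (contDiff_A1 hφ)) hf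

lemma contDiff_L2 {n : WithTop ℕ∞} (hφ : ContDiff ℝ (n + 1) φ) (hf : ContDiff ℝ (n + 1) f) :
    ContDiff ℝ n (L2 φ f) := by
  rw [L2_eq_vfield]
  exact ContDiff.vfield (contDiff_uField_apply (contDiff_A2 hφ)) hf

lemma contDiff_Lb1 {n : WithTop ℕ∞} (hφ : ContDiff ℝ (n + 1) φ) (hf : ContDiff ℝ (n + 1) f) :
    ContDiff ℝ n (Lb1 φ f) := by
  rw [Lb1_eq_vfield]
  exact ContDiff.vfield (contDiff_uField_apply (contDiff_conj_A1 hφ)) hf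

lemma differentiable_kf (hφ : ContDiff ℝ 3 φ)
    (h0 : ∀ p, L1 φ (fun q => conj (A1 φ q)) p - Lb1 φ (A1 φ) p ≠ 0) :
    Differentiable ℝ (kf φ) := by
  have hφ' : ContDiff ℝ (1 + 1 + 1) φ := hφ
  have hN : ContDiff ℝ 1 fun p => -(L2 φ (fun q => conj (A1 φ q)) p - Lb1 φ (A2 φ) p) :=
    ((contDiff_L2 (hφ'.of_le (by norm_num)) (contDiff_conj_A1 hφ')).sub
      (contDiff_Lb1 (hφ'.of_le (by norm_num)) (contDiff_A2 hφ'))).neg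
  have hD : ContDiff ℝ 1 fun p => L1 φ (fun q => conj (A1 φ q)) p - Lb1 φ (A1 φ) p :=
    (contDiff_L1 (hφ'.of_le (by norm_num)) (contDiff_conj_A1 hφ')).sub
      (contDiff_Lb1 (hφ'.of_le (by norm_num)) (contDiff_A1 hφ'))
  exact (hN.mul (hD.inv h0)).differentiable one_ne_zero

lemma bracket_L2_L1 (hφ : ContDiff ℝ 2 φ) (hf : ContDiff ℝ 2 f) (p : V5) :
    L2 φ (L1 φ f) p - L1 φ (L2 φ f) p = (L2 φ (A1 φ) p - L1 φ (A2 φ) p) * du f p := by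
  have hφ' : ContDiff ℝ (1 + 1) φ := hφ
  rw [L1_eq_vfield, L2_eq_vfield]
  exact vfield_uField_comm ((contDiff_A2 hφ').differentiable one_ne_zero p)
    ((contDiff_A1 hφ').differentiable one_ne_zero p) hf

lemma bracket_L1_Lb1 (hφ : ContDiff ℝ 2 φ) (hf : ContDiff ℝ 2 f) (p : V5) :
    L1 φ (Lb1 φ f) p - Lb1 φ (L1 φ f) p
      = (L1 φ (fun q => conj (A1 φ q)) p - Lb1 φ (A1 φ) p) * du f p := by
  have hφ' : ContDiff ℝ (1 + 1) φ := hφ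
  rw [L1_eq_vfield, Lb1_eq_vfield]
  exact vfield_uField_comm ((contDiff_A1 hφ').differentiable one_ne_zero p)
    ((contDiff_conj_A1 hφ').differentiable one_ne_zero p) hf

lemma bracket_L2_Lb1 (hφ : ContDiff ℝ 2 φ) (hf : ContDiff ℝ 2 f) (p : V5) :
    L2 φ (Lb1 φ f) p - Lb1 φ (L2 φ f) p
      = (L2 φ (fun q => conj (A1 φ q)) p - Lb1 φ (A2 φ) p) * du f p := by
  have hφ' : ContDiff ℝ (1 + 1) φ := hφ
  rw [L2_eq_vfield, Lb1_eq_vfield]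
  exact vfield_uField_comm ((contDiff_A2 hφ').differentiable one_ne_zero p)
    ((contDiff_conj_A1 hφ').differentiable one_ne_zero p) hf

def phiAddIU (φ : V5 → ℝ) : V5 → ℂ := fun q => cl φ q + I * (q 4 : ℂ)

lemma contDiff_phiAddIU {n : WithTop ℕ∞} (hφ : ContDiff ℝ n φ) : ContDiff ℝ n (phiAddIU φ) :=
  (contDiff_cl hφ).add (contDiff_const.mul (ofRealCLM.contDiff.comp (contDiff_apply ℝ ℝ 4)))

lemma pd_phiAddIU (hφ : DifferentiableAt ℝ φ p) (j : Fin 5) :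
    pd j (phiAddIU φ) p = pd j (cl φ) p + if j = 4 then I else 0 := by
  have hu : HasFDerivAt (fun q : V5 => I * (q 4 : ℂ))
      (I • ofRealCLM.comp (ContinuousLinearMap.proj 4)) p :=
    (ofRealCLM.hasFDerivAt.comp p (hasFDerivAt_apply 4 p)).const_mul I
  have hcl : DifferentiableAt ℝ (cl φ) p := ofRealCLM.differentiableAt.comp p hφ
  rw [show phiAddIU φ = fun q => cl φ q + I * (q 4 : ℂ) from rfl,
    pd_add hcl hu.differentiableAt]
  simp only [pd, hu.fderiv]
  split_ifs with h <;> simp [h, eq_comm]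

lemma L1_phiAddIU (hφ : Differentiable ℝ φ) : L1 φ (phiAddIU φ) = 0 := by
  funext p
  have hA1 : A1 φ p * (I + du (cl φ) p) = -wz1 (cl φ) p :=
    div_mul_cancel₀ _ (I_add_du_cl_ne_zero (hφ p))
  simp only [L1, wz1, du, pd_phiAddIU (hφ p)] at hA1 ⊢
  simp only [Fin.reduceEq, if_true, if_false, Pi.zero_apply]
  linear_combination hA1

lemma L2_phiAddIU (hφ : Differentiable ℝ φ) : L2 φ (phiAddIU φ) = 0 := by
  funext p
  have hA2 : A2 φ p * (I + du (cl φ) p) = -wz2 (cl φ) p :=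
    div_mul_cancel₀ _ (I_add_du_cl_ne_zero (hφ p))
  simp only [L2, wz2, du, pd_phiAddIU (hφ p)] at hA2 ⊢
  simp only [Fin.reduceEq, if_true, if_false, Pi.zero_apply]
  linear_combination hA2

/-- `[L₂, L₁] = (L₂A₁ − L₁A₂) ∂ᵤ` kills `φ + iu`, whose `u`-derivative `i + φᵤ` never vanishes. -/
lemma L2_A1_eq_L1_A2 (hφ : ContDiff ℝ 2 φ) (p : V5) : L2 φ (A1 φ) p = L1 φ (A2 φ) p := by
  have hφ' : Differentiable ℝ φ := hφ.differentiable two_ne_zero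
  have h := bracket_L2_L1 hφ (contDiff_phiAddIU hφ) p
  rw [L1_phiAddIU hφ', L2_phiAddIU hφ'] at h
  have hdu : du (phiAddIU φ) p ≠ 0 := by
    rw [du, pd_phiAddIU (hφ' p), if_pos rfl, add_comm]
    exact I_add_du_cl_ne_zero (hφ' p)
  have h00 : L2 φ 0 p - L1 φ 0 p = 0 := by simp [L1, L2, wz1, wz2, du, pd]
  rw [h00, eq_comm, mul_eq_zero_iff_right hdu, sub_eq_zero] at h
  exact h

lemma Kof_sub_vfield_Kof (c : V5 → Fin 5 → ℂ) (hk : DifferentiableAt ℝ (kf φ) p)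
    (h1 : DifferentiableAt ℝ (L1 φ f) p) (h2 : DifferentiableAt ℝ (L2 φ f) p) :
    Kof φ (vfield c f) p - vfield c (Kof φ f) p
      = kf φ p * (L1 φ (vfield c f) p - vfield c (L1 φ f) p)
        + (L2 φ (vfield c f) p - vfield c (L2 φ f) p) - vfield c (kf φ) p * L1 φ f p := by
  rw [show Kof φ f = fun q => kf φ q * L1 φ f q + L2 φ f q from rfl,
    vfield_add (f := fun q => kf φ q * L1 φ f q) c (hk.mul h1) h2, vfield_mul c hk h1, Kof]
  ring

lemma kf_mul_add_eq_zero (h0 : L1 φ (fun q => conj (A1 φ q)) p - Lb1 φ (A1 φ) p ≠ 0) :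
    kf φ p * (L1 φ (fun q => conj (A1 φ q)) p - Lb1 φ (A1 φ) p)
      + (L2 φ (fun q => conj (A1 φ q)) p - Lb1 φ (A2 φ) p) = 0 := by
  rw [kf, div_mul_cancel₀ _ h0]
  ring

end

/-- The brackets `[K, L₁] = −L₁(k)·L₁` and `[K, L̄₁] = −L̄₁(k)·L₁` involving the
Levi-kernel field `K` of General Class IV₂. -/
theorem class_IV₂_K_brackets (hφ : ContDiff ℝ 3 φ)
    (h0 : ∀ p, L1 φ (fun q => conj (A1 φ q)) p - Lb1 φ (A1 φ) p ≠ 0) :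
    ∀ f : V5 → ℂ, ContDiff ℝ 2 f → ∀ p,
      (Kof φ (L1 φ f) p - L1 φ (Kof φ f) p = -(L1 φ (kf φ) p) * L1 φ f p) ∧
      (Kof φ (Lb1 φ f) p - Lb1 φ (Kof φ f) p = -(Lb1 φ (kf φ) p) * L1 φ f p) := by
  intro f hf p
  have hφ' : ContDiff ℝ (1 + 1) φ := hφ.of_le (by norm_num)
  have hf' : ContDiff ℝ (1 + 1) f := hf
  have hk : DifferentiableAt ℝ (kf φ) p := differentiable_kf hφ h0 p
  have h1 : DifferentiableAt ℝ (L1 φ f) p := (contDiff_L1 hφ' hf').differentiable one_ne_zero p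
  have h2 : DifferentiableAt ℝ (L2 φ f) p := (contDiff_L2 hφ' hf').differentiable one_ne_zero p
  constructor
  · have h := Kof_sub_vfield_Kof (coeffL1 φ) hk h1 h2
    rw [← L1_eq_vfield] at h
    rw [h, bracket_L2_L1 hφ' hf p, L2_A1_eq_L1_A2 hφ' p]
    ring
  · have h := Kof_sub_vfield_Kof (coeffLb1 φ) hk h1 h2
    rw [← Lb1_eq_vfield] at h
    rw [h, bracket_L1_Lb1 hφ' hf p, bracket_L2_Lb1 hφ' hf p]
    linear_combination du f p * kf_mul_add_eq_zero (h0 p)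

end
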